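/- arXiv:2605.30473 — 2 statements merged into one kernel-verified Lean document; each statement's English description precedes it below -/
import Mathlib

section
/- On ℓ²(ℕ) with 0 < q < 1, define a = S∘√(1−q^{2N}), where S is the backward shift and √(1−q^{2N}) is the diagonal operator e_i ↦ √(1−q^{2i}) e_i. Then a satisfies the quantum disk relation q²·a*a − a·a* = (q² − 1)·1, i.e. q²(a*a) − aa* = (q²−1)·Id. -/
/-!
The operator `a = S ∘ √(1 - q^{2N})` is a weighted backward shift, `a e₀ = 0` and
`a e_{i+1} = w_i e_i` with `w_i = √(1 - q^{2(i+1)})`. For such a shift both `a* a` and `a a*` are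
diagonal, with entries `|w_{i-1}|²` (and `0` at `i = 0`) and `|w_i|²`, so the relation reduces on
each `e_i` to the scalar identity `q² (1 - q^{2i}) - (1 - q^{2(i+1)}) = q² - 1`.
-/

open ContinuousLinearMap

noncomputable def e (i : ℕ) : lp (fun _ : ℕ => ℂ) 2 := lp.single 2 i 1

open scoped lp ComplexConjugate

theorem inner_e_e (i j : ℕ) : inner ℂ (e i) (e j) = if i = j then 1 else 0 := by
  rw [e, lp.inner_single_left, e, lp.single_apply, Pi.single_apply]
  split_ifs <;> simp_all

theorem lp.ext_inner_e {v w : ℓ²(ℕ, ℂ)} (h : ∀ j, inner ℂ (e j) v = inner ℂ (e j) w) : v = w := by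
  ext j
  simpa [e, lp.inner_single_left] using h j

theorem lp.continuousLinearMap_ext_e {F : Type*} [AddCommMonoid F] [Module ℂ F]
    [TopologicalSpace F] [T2Space F] {T U : ℓ²(ℕ, ℂ) →L[ℂ] F} (h : ∀ i, T (e i) = U (e i)) :
    T = U :=
  lp.ext_continuousLinearMap ENNReal.ofNat_ne_top fun i => ext_ring (h i)

structure IsWeightedBackwardShift (T : ℓ²(ℕ, ℂ) →L[ℂ] ℓ²(ℕ, ℂ)) (w : ℕ → ℂ) : Prop where
  apply_e_zero : T (e 0) = 0
  apply_e_succ : ∀ i, T (e (i + 1)) = w i • e i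

namespace IsWeightedBackwardShift

variable {T : ℓ²(ℕ, ℂ) →L[ℂ] ℓ²(ℕ, ℂ)} {w : ℕ → ℂ}

theorem mul_diagonal (hT : IsWeightedBackwardShift T w) {D : ℓ²(ℕ, ℂ) →L[ℂ] ℓ²(ℕ, ℂ)}
    {d : ℕ → ℂ} (hD : ∀ i, D (e i) = d i • e i) :
    IsWeightedBackwardShift (T * D) (fun i => d (i + 1) * w i) where
  apply_e_zero := by rw [mul_apply_eq_comp, hD, map_smul, hT.apply_e_zero, smul_zero]
  apply_e_succ i := by rw [mul_apply_eq_comp, hD, map_smul, hT.apply_e_succ, smul_smul]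

theorem adjoint_apply_e (hT : IsWeightedBackwardShift T w) (i : ℕ) :
    adjoint T (e i) = conj (w i) • e (i + 1) := by
  refine lp.ext_inner_e fun j => ?_
  rw [adjoint_inner_right, inner_smul_right]
  cases j with
  | zero => simp [hT.apply_e_zero, inner_e_e]
  | succ j =>
    rw [hT.apply_e_succ, inner_smul_left, inner_e_e, inner_e_e]
    by_cases h : j = i <;> simp [h]

theorem adjoint_mul_self_apply_e_succ (hT : IsWeightedBackwardShift T w) (i : ℕ) :
    (adjoint T * T) (e (i + 1)) = ((‖w i‖ ^ 2 : ℝ) : ℂ) • e (i + 1) := by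
  rw [mul_apply_eq_comp, hT.apply_e_succ, map_smul, hT.adjoint_apply_e, smul_smul,
    Complex.mul_conj']
  norm_cast

theorem mul_adjoint_self_apply_e (hT : IsWeightedBackwardShift T w) (i : ℕ) :
    (T * adjoint T) (e i) = ((‖w i‖ ^ 2 : ℝ) : ℂ) • e i := by
  rw [mul_apply_eq_comp, hT.adjoint_apply_e, map_smul, hT.apply_e_succ, smul_smul,
    Complex.conj_mul']
  norm_cast

theorem smul_adjoint_mul_self_sub_mul_adjoint (hT : IsWeightedBackwardShift T w) {r : ℝ}
    (hw : ∀ i, ‖w i‖ ^ 2 = 1 - r ^ (i + 1)) :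
    (r : ℂ) • (adjoint T * T) - T * adjoint T = ((r : ℂ) - 1) • 1 := by
  refine lp.continuousLinearMap_ext_e fun i => ?_
  simp only [sub_apply, smul_apply]
  cases i with
  | zero =>
    rw [mul_apply_eq_comp, hT.apply_e_zero, map_zero, smul_zero, zero_sub,
      hT.mul_adjoint_self_apply_e, hw, ← neg_smul]
    congr 1
    push_cast
    ring
  | succ i =>
    rw [hT.adjoint_mul_self_apply_e_succ, hT.mul_adjoint_self_apply_e, hw, hw, smul_smul,
      ← sub_smul]
    congr 1
    push_cast
    ring

end IsWeightedBackwardShift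

theorem stmt3 (q : ℝ) (hq0 : 0 < q) (hq1 : q < 1)
    (S M a : lp (fun _ : ℕ => ℂ) 2 →L[ℂ] lp (fun _ : ℕ => ℂ) 2)
    (hS0 : S (e 0) = 0) (hS : ∀ i : ℕ, S (e (i + 1)) = e i)
    (hM : ∀ i : ℕ, M (e i) = (Real.sqrt (1 - q ^ (2 * i)) : ℂ) • e i)
    (ha : a = S * M) :
    ((q : ℂ) ^ 2) • (adjoint a * a) - a * adjoint a
      = (((q : ℂ) ^ 2 - 1)) • (1 : lp (fun _ : ℕ => ℂ) 2 →L[ℂ] lp (fun _ : ℕ => ℂ) 2) := by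
  have hS_shift : IsWeightedBackwardShift S fun _ => 1 :=
    ⟨hS0, fun i => by rw [hS, one_smul]⟩
  have hweight (i : ℕ) :
      ‖(Real.sqrt (1 - q ^ (2 * (i + 1))) : ℂ) * 1‖ ^ 2 = 1 - (q ^ 2) ^ (i + 1) := by
    have hpow : (q ^ 2) ^ (i + 1) ≤ 1 := pow_le_one₀ (by positivity) (by nlinarith)
    rw [mul_one, Complex.norm_real, Real.norm_eq_abs, sq_abs, ← pow_mul,
      Real.sq_sqrt (by rw [pow_mul]; linarith)]
  subst ha
  simpa using (hS_shift.mul_diagonal hM).smul_adjoint_mul_self_sub_mul_adjoint hweight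
end

section
/- Let a ∈ B(H) satisfy q² a*a − aa* = (q²−1)·1 with 0 < q < 1, and let ξ, ζ ∈ ker(a) with ⟨ξ, ζ⟩ = 0. Then for all natural numbers n, m: ⟨(a*)ⁿ ξ, (a*)ᵐ ζ⟩ = 0. Moreover for ξ ∈ ker(a), ‖(a*)ⁿ ξ‖² = (∏_{s=1}^{n}(1−q^{2s}))·‖ξ‖². -/
/-!
Write `c = q²`. Iterating the relation `a a* = c a* a + (1 - c)` gives
`a (a*)ⁿ⁺¹ ξ = (1 - cⁿ⁺¹) (a*)ⁿ ξ` for `ξ ∈ ker a`. Hence moving one `a*` across the inner product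
`⟨(a*)ⁿ⁺¹ ξ, (a*)ᵐ⁺¹ ζ⟩` lowers both exponents and contributes a factor `1 - cᵐ⁺¹`; when the
exponents differ, one side reaches `ξ` or `ζ` first and is killed by `a`.
-/

open ContinuousLinearMap

theorem mul_pow_succ_eq_of_smul_mul_sub_mul_eq {R A : Type*} [CommRing R] [Ring A] [Algebra R A]
    {a b : A} {c : R} (hrel : c • (b * a) - a * b = (c - 1) • (1 : A)) (n : ℕ) :
    a * b ^ (n + 1) = c ^ (n + 1) • (b ^ (n + 1) * a) + (1 - c ^ (n + 1)) • b ^ n := by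
  have hab : a * b = c • (b * a) + (1 - c) • 1 := by
    rw [← neg_sub c 1, neg_smul, ← hrel]; abel
  induction n with
  | zero => simpa using hab
  | succ n ih =>
    calc a * b ^ (n + 2) = a * b ^ (n + 1) * b := by rw [mul_assoc, ← pow_succ]
      _ = c ^ (n + 1) • (b ^ (n + 1) * (a * b)) + (1 - c ^ (n + 1)) • b ^ (n + 1) := by
        rw [ih, add_mul, smul_mul_assoc, smul_mul_assoc, mul_assoc, ← pow_succ]
      _ = c ^ (n + 2) • (b ^ (n + 2) * a) + (1 - c ^ (n + 2)) • b ^ (n + 1) := by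
        rw [hab, mul_add, mul_smul_comm, mul_smul_comm, ← mul_assoc, ← pow_succ, mul_one,
          smul_add, smul_smul, smul_smul, add_assoc, ← add_smul]
        congr 2 <;> ring

section QCommutationRelation

variable {H : Type*} [NormedAddCommGroup H] [InnerProductSpace ℂ H] [CompleteSpace H]
  {a : H →L[ℂ] H} {c : ℂ} (hrel : c • (adjoint a * a) - a * adjoint a = (c - 1) • 1)
include hrel

theorem apply_adjoint_pow_succ_of_apply_eq_zero {v : H} (hv : a v = 0) (n : ℕ) :
    a ((adjoint a ^ (n + 1)) v) = (1 - c ^ (n + 1)) • (adjoint a ^ n) v := by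
  rw [← mul_apply_eq_comp, mul_pow_succ_eq_of_smul_mul_sub_mul_eq hrel n]
  simp [hv]

theorem inner_adjoint_pow_apply_adjoint_pow_apply {ξ ζ : H} (hξ : a ξ = 0) (hζ : a ζ = 0)
    (n m : ℕ) :
    inner ℂ ((adjoint a ^ n) ξ) ((adjoint a ^ m) ζ)
      = if n = m then (∏ s ∈ Finset.Icc 1 n, (1 - c ^ s)) * inner ℂ ξ ζ else 0 := by
  induction n generalizing m with
  | zero =>
    cases m with
    | zero => simp
    | succ m => simp [pow_succ', adjoint_inner_right, hξ]
  | succ n ih =>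
    cases m with
    | zero => simp [pow_succ', adjoint_inner_left, hζ]
    | succ m =>
      rw [pow_succ', mul_apply_eq_comp, adjoint_inner_left,
        apply_adjoint_pow_succ_of_apply_eq_zero hrel hζ, inner_smul_right, ih,
        Finset.prod_Icc_succ_top (by omega)]
      obtain rfl | hnm := eq_or_ne n m
      · simp only [if_true]; ring
      · simp [hnm]

end QCommutationRelation

theorem norm_adjoint_pow_apply_sq {H : Type*} [NormedAddCommGroup H] [InnerProductSpace ℂ H]
    [CompleteSpace H] {a : H →L[ℂ] H} {c : ℝ}
    (hrel : (c : ℂ) • (adjoint a * a) - a * adjoint a = ((c : ℂ) - 1) • 1) {v : H} (hv : a v = 0)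
    (n : ℕ) : ‖(adjoint a ^ n) v‖ ^ 2 = (∏ s ∈ Finset.Icc 1 n, (1 - c ^ s)) * ‖v‖ ^ 2 := by
  have h := inner_adjoint_pow_apply_adjoint_pow_apply hrel hv hv n n
  rw [if_pos rfl, inner_self_eq_norm_sq_to_K, inner_self_eq_norm_sq_to_K] at h
  norm_cast at h
  exact Complex.ofReal_injective (h.trans (Complex.ofReal_mul _ _).symm)

theorem stmt6_general {H : Type*} [NormedAddCommGroup H] [InnerProductSpace ℂ H] [CompleteSpace H]
    (q : ℝ) (a : H →L[ℂ] H)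
    (hrel : ((q : ℂ) ^ 2) • (adjoint a * a) - a * adjoint a
      = ((q : ℂ) ^ 2 - 1) • (1 : H →L[ℂ] H))
    (ξ ζ : H) (hξ : a ξ = 0) (hζ : a ζ = 0) (horth : (inner ℂ ξ ζ : ℂ) = 0) :
    (∀ n m : ℕ, (inner ℂ (((adjoint a) ^ n) ξ) (((adjoint a) ^ m) ζ) : ℂ) = 0) ∧
    (∀ n : ℕ, ‖((adjoint a) ^ n) ξ‖ ^ 2
      = (∏ s ∈ Finset.Icc 1 n, (1 - q ^ (2 * s))) * ‖ξ‖ ^ 2) := by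
  refine ⟨fun n m => ?_, fun n => ?_⟩
  · rw [inner_adjoint_pow_apply_adjoint_pow_apply hrel hξ hζ, horth, mul_zero, ite_self]
  · have hrel_real : ((q ^ 2 : ℝ) : ℂ) • (adjoint a * a) - a * adjoint a
        = ((q ^ 2 : ℝ) - 1 : ℂ) • 1 := by
      push_cast; exact hrel
    simp only [pow_mul, norm_adjoint_pow_apply_sq hrel_real hξ n]

theorem stmt6 {H : Type*} [NormedAddCommGroup H] [InnerProductSpace ℂ H] [CompleteSpace H]
    (q : ℝ) (hq0 : 0 < q) (hq1 : q < 1) (a : H →L[ℂ] H)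
    (hrel : ((q : ℂ) ^ 2) • (adjoint a * a) - a * adjoint a
      = ((q : ℂ) ^ 2 - 1) • (1 : H →L[ℂ] H))
    (ξ ζ : H) (hξ : a ξ = 0) (hζ : a ζ = 0) (horth : (inner ℂ ξ ζ : ℂ) = 0) :
    (∀ n m : ℕ, (inner ℂ (((adjoint a) ^ n) ξ) (((adjoint a) ^ m) ζ) : ℂ) = 0) ∧
    (∀ n : ℕ, ‖((adjoint a) ^ n) ξ‖ ^ 2
      = (∏ s ∈ Finset.Icc 1 n, (1 - q ^ (2 * s))) * ‖ξ‖ ^ 2) :=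
  stmt6_general q a hrel ξ ζ hξ hζ horth
end
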